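/- arXiv:2601.04747 — 2 statements merged into one kernel-verified Lean document; each statement's English description precedes it below -/
import Mathlib

section
/- Let G be a finite solvable group generated by a subset Σ ⊆ G, let Δ ⊆ G, and let k = ⌈log₂|G|⌉. For X ⊆ G define N(X) = {h⁻¹·g·h : g ∈ X, h ∈ {1} ∪ Σ^{≤k}}. Define X_0 = N(Δ) and, for i ≥ 0, X_{i+1} = N({ g⁻¹·(h⁻¹gh)⁻¹·g·(h⁻¹gh) : g ∈ X_i, h ∈ {1} ∪ Σ^{≤k} }), and set X* = ⋃_{i ≥ 0} X_i. Then there exists a finite chain ncl_G(Δ) = N_0 ≥ N_1 ≥ … ≥ N_m = {1} of subgroups such that for every j < m the subgroup N_{j+1} is normal in N_j with cyclic quotient N_j/N_{j+1}, and the set X* ∩ N_j generates N_j; in particular, X* generates the normal closure ncl_G(Δ). -/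
/-- Product of a nonempty list of semigroup elements (head times the rest). -/
def listProd₁ {S : Type*} [Semigroup S] : S → List S → S
  | a, [] => a
  | a, b :: l => listProd₁ (a * b) l

/-- `Σ^{≤k}`: elements expressible as a nonempty product of at most `k` elements of `Sig`. -/
def ProdLE {S : Type*} [Semigroup S] (Sig : Set S) (k : ℕ) : Set S :=
  { t | ∃ (a : S) (L : List S),
      a ∈ Sig ∧ (∀ x ∈ L, x ∈ Sig) ∧ L.length + 1 ≤ k ∧ listProd₁ a L = t }

/-- `S^k`: the set of all products of exactly `k` elements of `S`. -/
def powSet (S : Type*) [Semigroup S] (k : ℕ) : Set S :=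
  { t | ∃ (a : S) (L : List S), L.length + 1 = k ∧ listProd₁ a L = t }

/-- `N(X)`: all conjugates `h⁻¹·g·h` with `g ∈ X` and `h ∈ Hs`. -/
def conjSet {G : Type*} [Group G] (Hs X : Set G) : Set G :=
  { x | ∃ g ∈ X, ∃ h ∈ Hs, x = h⁻¹ * g * h }

/-- The set of commutators `⁅g, g^h⁆ = g⁻¹·(h⁻¹gh)⁻¹·g·(h⁻¹gh)` with `g ∈ X`, `h ∈ Hs`. -/
def commConjSet {G : Type*} [Group G] (Hs X : Set G) : Set G :=
  { x | ∃ g ∈ X, ∃ h ∈ Hs, x = g⁻¹ * (h⁻¹ * g * h)⁻¹ * g * (h⁻¹ * g * h) }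

/-- The sequence `X_0 = N(Δ)`, `X_{i+1} = N({⁅g, g^h⁆ : g ∈ X_i, h ∈ Hs})`. -/
def pccSeq {G : Type*} [Group G] (Hs Δ : Set G) : ℕ → Set G
  | 0 => conjSet Hs Δ
  | i + 1 => conjSet Hs (commConjSet Hs (pccSeq Hs Δ i))

/-- `X* = ⋃_{i ≥ 0} X_i`. -/
def pccStar {G : Type*} [Group G] (Hs Δ : Set G) : Set G := ⋃ i : ℕ, pccSeq Hs Δ i

/-- `K` is normal in `H` (as subgroups of an ambient group, with `K ≤ H`) and the
quotient `H ⧸ K` is cyclic. -/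
def NormalWithCyclicQuotient {G : Type*} [Group G] (K H : Subgroup G) : Prop :=
  K ≤ H ∧ ∃ hn : (K.subgroupOf H).Normal,
    letI := hn
    ∃ q : H ⧸ K.subgroupOf H, ∀ x : H ⧸ K.subgroupOf H, ∃ z : ℤ, q ^ z = x

/-! ### Auxiliary lemmas -/

section Aux

open Subgroup Function

lemma listProd₁_append_single {S : Type*} [Semigroup S] (a b : S) (L : List S) :
    listProd₁ a (L ++ [b]) = listProd₁ a L * b := by
  induction L generalizing a with
  | nil => rfl
  | cons c l ih => simpa [listProd₁] using ih (a * c)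

lemma listProd₁_map {G H : Type*} [Group G] [Group H] (φ : G →* H) (a : G) (L : List G) :
    φ (listProd₁ a L) = listProd₁ (φ a) (L.map φ) := by
  induction L generalizing a with
  | nil => rfl
  | cons c l ih => simpa [listProd₁] using ih (a * c)

lemma prodLE_mono {G : Type*} [Group G] (Sig : Set G) {j k : ℕ} (h : j ≤ k) :
    ProdLE Sig j ⊆ ProdLE Sig k := by
  rintro t ⟨a, L, ha, hL, hlen, rfl⟩
  exact ⟨a, L, ha, hL, by omega, rfl⟩

lemma conjSet_mono_hs {G : Type*} [Group G] {Hs Hs' X : Set G} (h : Hs ⊆ Hs') :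
    conjSet Hs X ⊆ conjSet Hs' X := by
  rintro t ⟨g, hg, hh, hhm, rfl⟩
  exact ⟨g, hg, hh, h hhm, rfl⟩

lemma conjSet_mono_x {G : Type*} [Group G] {Hs X X' : Set G} (h : X ⊆ X') :
    conjSet Hs X ⊆ conjSet Hs X' := by
  rintro t ⟨g, hg, hh, hhm, rfl⟩
  exact ⟨g, h hg, hh, hhm, rfl⟩

lemma conjSet_subset_normalClosure {G : Type*} [Group G] (Hs Y : Set G) :
    conjSet Hs Y ⊆ Subgroup.normalClosure Y := by
  rintro x ⟨g, hg, h, hh, rfl⟩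
  have h1 : g ∈ Subgroup.normalClosure Y := Subgroup.subset_normalClosure hg
  have := (Subgroup.normalClosure_normal (s := Y)).conj_mem g h1 h⁻¹
  simpa using this

lemma subset_conjSet_self {G : Type*} [Group G] {Hs : Set G} (h1 : (1 : G) ∈ Hs) (Y : Set G) :
    Y ⊆ conjSet Hs Y := by
  intro y hy
  exact ⟨y, hy, 1, h1, by simp⟩

lemma two_mul_card_le_of_lt {G : Type*} [Group G] [Finite G] {H K : Subgroup G} (h : H < K) :
    2 * Nat.card H ≤ Nat.card K := by
  obtain ⟨m, hm⟩ := Subgroup.card_dvd_of_le h.le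
  have hpos : 0 < Nat.card H := Nat.card_pos
  have hkpos : 0 < Nat.card K := Nat.card_pos
  have hm0 : m ≠ 0 := by rintro rfl; omega
  have hm1 : m ≠ 1 := by
    rintro rfl
    rw [mul_one] at hm
    exact h.ne (Subgroup.eq_of_le_of_card_ge h.le hm.le)
  have : 2 ≤ m := by omega
  calc 2 * Nat.card H ≤ Nat.card H * m := by nlinarith
  _ = Nat.card K := hm.symm

lemma closure_conjSet_eq_normalClosure {G : Type*} [Group G] [Finite G]
    (Sig : Set G) (hgen : Subgroup.closure Sig = ⊤)
    (k : ℕ) (hk : Nat.card G ≤ 2 ^ k) (Y : Set G) :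
    Subgroup.closure (conjSet ({1} ∪ ProdLE Sig k) Y) = Subgroup.normalClosure Y := by
  set C : ℕ → Subgroup G := fun j => Subgroup.closure (conjSet ({1} ∪ ProdLE Sig j) Y) with hC
  have h1Hs : ∀ j, (1 : G) ∈ ({1} ∪ ProdLE Sig j : Set G) := fun j => Or.inl rfl
  have hmono : ∀ {a b : ℕ}, a ≤ b → C a ≤ C b := by
    intro a b hab
    exact Subgroup.closure_mono (conjSet_mono_hs (Set.union_subset_union_right _ (prodLE_mono Sig hab)))
  have hle : ∀ j, C j ≤ Subgroup.normalClosure Y := by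
    intro j
    rw [hC]
    exact (Subgroup.closure_le _).mpr (conjSet_subset_normalClosure _ Y)
  have hY : ∀ j, Y ⊆ C j := by
    intro j y hy
    exact Subgroup.subset_closure (subset_conjSet_self (h1Hs j) Y hy)
  have hstab : ∀ j, C j = C (j + 1) → (C j).Normal := by
    intro j hj
    rw [← Subgroup.normalizer_eq_top_iff, ← top_le_iff, ← hgen, Subgroup.closure_le]
    intro σ hσ
    have key : ∀ x ∈ C j, σ⁻¹ * x * (σ⁻¹)⁻¹ ∈ C j := by
      intro x hx
      have himg : (C j).map (MulAut.conj σ⁻¹).toMonoidHom ≤ C (j + 1) := by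
        rw [hC, MonoidHom.map_closure, Subgroup.closure_le]
        rintro _ ⟨_, ⟨g, hg, h, hh, rfl⟩, rfl⟩
        apply Subgroup.subset_closure
        refine ⟨g, hg, h * σ, ?_, ?_⟩
        · rcases hh with h1 | ⟨a, L, ha, hL, hlen, rfl⟩
          · right
            refine ⟨σ, [], hσ, by simp, by simp, ?_⟩
            rcases h1 with rfl
            simp [listProd₁]
          · right
            refine ⟨a, L ++ [σ], ha, ?_, by simp; omega, (listProd₁_append_single a σ L)⟩
            intro x hx
            rcases List.mem_append.mp hx with h1 | h2
            · exact hL x h1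
            · have hxσ : x = σ := by simpa using h2
              rw [hxσ]; exact hσ
        · show (MulAut.conj σ⁻¹) (h⁻¹ * g * h) = (h * σ)⁻¹ * g * (h * σ)
          simp [MulAut.conj_apply]
          group
      have hmem : (MulAut.conj σ⁻¹) x ∈ (C j).map (MulAut.conj σ⁻¹).toMonoidHom :=
        ⟨x, hx, rfl⟩
      have h2 := himg hmem
      rw [← hj] at h2
      simpa [MulAut.conj_apply] using h2
    have hmem : σ⁻¹ ∈ Subgroup.normalizer ((C j : Set G)) :=
      Subgroup.mem_normalizer_fintype (fun n hn => key n hn)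
    have hmem2 : σ⁻¹ ∈ Subgroup.normalizer (C j : Set G) := by
      rw [Subgroup.mem_normalizer_iff]
      exact fun h => hmem h
    simpa using (Subgroup.normalizer (C j : Set G)).inv_mem hmem2
  by_cases hex : ∃ j < k, C j = C (j + 1)
  · obtain ⟨j, hjk, hj⟩ := hex
    haveI := hstab j hj
    refine le_antisymm (hle k) ?_
    exact le_trans (Subgroup.normalClosure_le_normal (hY j)) (hmono hjk.le)
  · push_neg at hex
    have hstrict : ∀ j < k, C j < C (j + 1) := fun j hj =>
      lt_of_le_of_ne (hmono (by omega)) (hex j hj)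
    have hcard : ∀ j ≤ k, 2 ^ j ≤ Nat.card (C j) := by
      intro j
      induction j with
      | zero => intro _; have := Nat.card_pos (α := C 0); omega
      | succ j ih =>
        intro hj
        calc 2 ^ (j + 1) = 2 * 2 ^ j := by ring
        _ ≤ 2 * Nat.card (C j) := by
            have := ih (by omega); omega
        _ ≤ Nat.card (C (j + 1)) := two_mul_card_le_of_lt (hstrict j (by omega))
    have htop : C k = ⊤ := by
      apply Subgroup.eq_top_of_le_card
      exact le_trans hk (hcard k le_rfl)
    exact le_antisymm (hle k) (le_of_le_of_eq le_top htop.symm)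

lemma normal_iSup_of_normal {G : Type*} [Group G] {ι : Sort*} (f : ι → Subgroup G)
    (h : ∀ i, (f i).Normal) : (⨆ i, f i).Normal := by
  constructor
  intro n hn g
  refine Subgroup.iSup_induction f (C := fun x => g * x * g⁻¹ ∈ ⨆ i, f i) hn ?_ ?_ ?_
  · intro i x hx
    exact le_iSup f i ((h i).conj_mem x hx g)
  · simpa using (⨆ i, f i).one_mem
  · intro x y hx hy
    have hm := mul_mem hx hy
    have heq : g * x * g⁻¹ * (g * y * g⁻¹) = g * (x * y) * g⁻¹ := by group
    rwa [heq] at hm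

lemma image_prodLE {G H : Type*} [Group G] [Group H] (φ : G →* H) (Sig : Set G) (k : ℕ) :
    ProdLE (φ '' Sig) k ⊆ φ '' ProdLE Sig k := by
  rintro t ⟨a', L', ha', hL', hlen, rfl⟩
  obtain ⟨a, ha, rfl⟩ := ha'
  have hlift : ∀ L' : List H, (∀ x ∈ L', x ∈ φ '' Sig) →
      ∃ L : List G, (∀ x ∈ L, x ∈ Sig) ∧ L.map φ = L' := by
    intro L'
    induction L' with
    | nil => exact fun _ => ⟨[], by simp, rfl⟩
    | cons b l ih =>
      intro hmem
      obtain ⟨L, hL, rfl⟩ := ih (fun x hx => hmem x (List.mem_cons_of_mem _ hx))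
      obtain ⟨b0, hb0, rfl⟩ := hmem b (List.mem_cons_self)
      exact ⟨b0 :: L, by simpa using ⟨hb0, hL⟩, rfl⟩
  obtain ⟨L, hL, rfl⟩ := hlift L' hL'
  refine ⟨listProd₁ a L, ⟨a, L, ha, hL, by simpa using hlen, rfl⟩, listProd₁_map φ a L⟩

/-- In a finite group in which `g` commutes with all its conjugates by short words,
the normal closure of `g` is abelian. -/
lemma normalClosure_singleton_comm {Q : Type*} [Group Q] [Finite Q]
    (Sig : Set Q) (hgen : Subgroup.closure Sig = ⊤) (k : ℕ) (hk : Nat.card Q ≤ 2 ^ k)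
    (g : Q)
    (hcomm : ∀ h ∈ ({1} ∪ ProdLE Sig k : Set Q), g * (h⁻¹ * g * h) = (h⁻¹ * g * h) * g) :
    ∀ a ∈ Subgroup.normalClosure {g}, ∀ b ∈ Subgroup.normalClosure {g}, a * b = b * a := by
  have hB : Subgroup.closure (conjSet ({1} ∪ ProdLE Sig k) {g}) = Subgroup.normalClosure {g} :=
    closure_conjSet_eq_normalClosure Sig hgen k hk {g}
  haveI : (Subgroup.normalClosure {g}).Normal := Subgroup.normalClosure_normal
  have hgB : ∀ x ∈ Subgroup.normalClosure {g}, x * g = g * x := by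
    intro x hx
    rw [← hB] at hx
    have hcen : Subgroup.closure (conjSet ({1} ∪ ProdLE Sig k) {g}) ≤
        Subgroup.centralizer {g} := by
      rw [Subgroup.closure_le]
      rintro _ ⟨y, hy, h, hh, rfl⟩
      rcases hy with rfl
      rw [SetLike.mem_coe, Subgroup.mem_centralizer_iff]
      intro w hw
      rcases hw with rfl
      exact hcomm h hh
    have := hcen hx
    rw [Subgroup.mem_centralizer_iff] at this
    exact (this g rfl).symm
  have hDnormal : (Subgroup.centralizer ((Subgroup.normalClosure {g} : Subgroup Q) : Set Q)).Normal := by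
    constructor
    intro n hn u
    rw [Subgroup.mem_centralizer_iff] at hn ⊢
    intro x hx
    have hx' : u⁻¹ * x * u ∈ Subgroup.normalClosure {g} := by
      have := ‹(Subgroup.normalClosure ({g} : Set Q)).Normal›.conj_mem x hx u⁻¹
      simpa using this
    have h1 := hn _ hx'
    have h2 := congrArg (fun w => u * w * u⁻¹) h1
    calc x * (u * n * u⁻¹) = u * (u⁻¹ * x * u * n) * u⁻¹ := by group
    _ = u * (n * (u⁻¹ * x * u)) * u⁻¹ := by rw [h1]
    _ = u * n * u⁻¹ * x := by group
  have hgD : g ∈ Subgroup.centralizer ((Subgroup.normalClosure {g} : Subgroup Q) : Set Q) := by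
    rw [Subgroup.mem_centralizer_iff]
    intro x hx
    exact hgB x hx
  have hBD : Subgroup.normalClosure {g} ≤
      Subgroup.centralizer ((Subgroup.normalClosure {g} : Subgroup Q) : Set Q) := by
    haveI := hDnormal
    exact Subgroup.normalClosure_le_normal (by simpa using hgD)
  intro a ha b hb
  have := hBD hb
  rw [Subgroup.mem_centralizer_iff] at this
  exact this a ha

end Aux

section Main

open Subgroup Function

variable {G : Type*} [Group G]

/-- Commutators of elements of the normal closure of `y` land in `K`, provided the
basic commutator relations hold modulo `K`. -/
lemma ncl_commutator_mem {G : Type*} [Group G] [Finite G]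
    (Sig : Set G) (hgen : Subgroup.closure Sig = ⊤) (k : ℕ) (hk : Nat.card G ≤ 2 ^ k)
    (K : Subgroup G) [hKn : K.Normal] (y : G)
    (hy : ∀ h ∈ ({1} ∪ ProdLE Sig k : Set G), y⁻¹ * (h⁻¹ * y * h)⁻¹ * y * (h⁻¹ * y * h) ∈ K) :
    ∀ a ∈ Subgroup.normalClosure {y}, ∀ b ∈ Subgroup.normalClosure {y},
      a * b * a⁻¹ * b⁻¹ ∈ K := by
  let φ := QuotientGroup.mk' K
  have hφs : Surjective φ := QuotientGroup.mk'_surjective K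
  have hgen' : Subgroup.closure (φ '' Sig) = ⊤ := by
    rw [← MonoidHom.map_closure, hgen]
    exact Subgroup.map_top_of_surjective φ hφs
  have hcard : Nat.card (G ⧸ K) ≤ 2 ^ k :=
    le_trans (Nat.le_of_dvd Nat.card_pos (Subgroup.card_quotient_dvd_card K)) hk
  have hcomm' : ∀ h' ∈ ({1} ∪ ProdLE (φ '' Sig) k : Set (G ⧸ K)),
      φ y * (h'⁻¹ * φ y * h') = (h'⁻¹ * φ y * h') * φ y := by
    rintro h' (h1 | hp)
    · rcases h1 with rfl; simp
    · obtain ⟨h, hh, rfl⟩ := image_prodLE φ Sig k hp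
      have hmem := hy h (Or.inr hh)
      have h1 : φ (y⁻¹ * (h⁻¹ * y * h)⁻¹ * y * (h⁻¹ * y * h)) = 1 :=
        (QuotientGroup.eq_one_iff _).mpr hmem
      simp only [map_mul, map_inv] at h1
      have h3 := congrArg (fun w => ((φ h)⁻¹ * φ y * φ h) * φ y * w) h1
      simp only [mul_one] at h3
      calc φ y * ((φ h)⁻¹ * φ y * φ h)
          = (φ h)⁻¹ * φ y * φ h * φ y *
            ((φ y)⁻¹ * ((φ h)⁻¹ * φ y * φ h)⁻¹ * φ y * ((φ h)⁻¹ * φ y * φ h)) := by group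
        _ = (φ h)⁻¹ * φ y * φ h * φ y := h3
  have hmain := normalClosure_singleton_comm (φ '' Sig) hgen' k hcard (φ y) hcomm'
  intro a ha b hb
  have hmapncl : (Subgroup.normalClosure {y}).map φ = Subgroup.normalClosure {φ y} := by
    rw [Subgroup.map_normalClosure _ _ hφs, Set.image_singleton]
  have ha' : φ a ∈ Subgroup.normalClosure {φ y} := hmapncl ▸ ⟨a, ha, rfl⟩
  have hb' : φ b ∈ Subgroup.normalClosure {φ y} := hmapncl ▸ ⟨b, hb, rfl⟩
  have hc := hmain _ ha' _ hb'
  have heq : φ (a * b * a⁻¹ * b⁻¹) = 1 := by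
    simp only [map_mul, map_inv]
    rw [hc]
    group
  exact (QuotientGroup.eq_one_iff _).mp heq

/-- Commutators of the join `A ⊔ K` land in `K` when commutators of `A` do. -/
lemma sup_commutator_mem (K A : Subgroup G) [hKn : K.Normal]
    (hA : ∀ a ∈ A, ∀ b ∈ A, a * b * a⁻¹ * b⁻¹ ∈ K) :
    ∀ a ∈ A ⊔ K, ∀ b ∈ A ⊔ K, a * b * a⁻¹ * b⁻¹ ∈ K := by
  intro a ha b hb
  let φ := QuotientGroup.mk' K
  have hmapK : K.map φ = ⊥ := by
    rw [eq_bot_iff]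
    rintro x ⟨u, hu, rfl⟩
    rw [Subgroup.mem_bot, QuotientGroup.mk'_apply]
    exact (QuotientGroup.eq_one_iff u).mpr hu
  have hmap : (A ⊔ K).map φ = A.map φ := by
    rw [Subgroup.map_sup, hmapK, sup_bot_eq]
  obtain ⟨a0, ha0, haa⟩ : ∃ a0 ∈ A, φ a0 = φ a := by
    have : φ a ∈ (A ⊔ K).map φ := ⟨a, ha, rfl⟩
    rw [hmap] at this
    obtain ⟨a0, h1, h2⟩ := this
    exact ⟨a0, h1, h2⟩
  obtain ⟨b0, hb0, hbb⟩ : ∃ b0 ∈ A, φ b0 = φ b := by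
    have : φ b ∈ (A ⊔ K).map φ := ⟨b, hb, rfl⟩
    rw [hmap] at this
    obtain ⟨b0, h1, h2⟩ := this
    exact ⟨b0, h1, h2⟩
  have h1 : φ (a0 * b0 * a0⁻¹ * b0⁻¹) = 1 :=
    (QuotientGroup.eq_one_iff _).mpr (hA a0 ha0 b0 hb0)
  have heq : φ (a * b * a⁻¹ * b⁻¹) = 1 := by
    simp only [map_mul, map_inv] at h1 ⊢
    rw [← haa, ← hbb]
    exact h1
  exact (QuotientGroup.eq_one_iff _).mp heq

/-- The cyclic-quotient single step. -/
lemma cyclicStep (H K small : Subgroup G) (z : G) (hz : z ∈ H)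
    (hKs : K ≤ small) (hsH : small ≤ H)
    (hcomm : ∀ a ∈ H, ∀ b ∈ H, a * b * a⁻¹ * b⁻¹ ∈ K) :
    NormalWithCyclicQuotient small (Subgroup.zpowers z ⊔ small) := by
  set big := Subgroup.zpowers z ⊔ small with hbig
  have hbigH : big ≤ H := sup_le (Subgroup.zpowers_le.mpr hz) hsH
  have hsmall_big : small ≤ big := le_sup_right
  refine ⟨hsmall_big, ?_⟩
  have hn : (small.subgroupOf big).Normal := by
    constructor
    intro n hn' g
    rw [Subgroup.mem_subgroupOf] at hn' ⊢
    have hgH : (g : G) ∈ H := hbigH g.2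
    have hnH : (n : G) ∈ H := hsH hn'
    have hcm : (g : G) * n * (g : G)⁻¹ * (n : G)⁻¹ ∈ K := hcomm _ hgH _ hnH
    have heq : ((g * n * g⁻¹ : big) : G) = ((g : G) * n * (g : G)⁻¹ * (n : G)⁻¹) * n := by
      push_cast
      group
    rw [heq]
    exact mul_mem (hKs hcm) hn'
  refine ⟨hn, ?_⟩
  set zb : big := ⟨z, Subgroup.mem_sup_left (Subgroup.mem_zpowers z)⟩ with hzb
  have htop : Subgroup.zpowers zb ⊔ small.subgroupOf big = (⊤ : Subgroup big) := by
    apply Subgroup.map_injective big.subtype_injective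
    rw [Subgroup.map_sup, MonoidHom.map_zpowers,
      Subgroup.subgroupOf_map_subtype, inf_of_le_left hsmall_big,
      ← MonoidHom.range_eq_map, Subgroup.subtype_range]
    rfl
  letI := hn
  refine ⟨QuotientGroup.mk' (small.subgroupOf big) zb, ?_⟩
  intro x
  obtain ⟨w, rfl⟩ := QuotientGroup.mk'_surjective (small.subgroupOf big) x
  have hw : w ∈ Subgroup.zpowers zb ⊔ small.subgroupOf big := by
    rw [htop]; exact Subgroup.mem_top w
  have hm : (QuotientGroup.mk' (small.subgroupOf big)) w ∈
      Subgroup.zpowers ((QuotientGroup.mk' (small.subgroupOf big)) zb) := by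
    have h1 : (QuotientGroup.mk' (small.subgroupOf big)) w ∈
        (Subgroup.zpowers zb ⊔ small.subgroupOf big).map (QuotientGroup.mk' (small.subgroupOf big)) :=
      ⟨w, hw, rfl⟩
    rw [Subgroup.map_sup, MonoidHom.map_zpowers] at h1
    have hbot : (small.subgroupOf big).map (QuotientGroup.mk' (small.subgroupOf big)) = ⊥ := by
      rw [eq_bot_iff]
      rintro u ⟨v, hv, rfl⟩
      simpa [Subgroup.mem_bot] using (QuotientGroup.eq_one_iff v).mpr hv
    rwa [hbot, sup_bot_eq] at h1
  exact Subgroup.mem_zpowers_iff.mp hm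

/-! ### Chains -/

/-- `K` is generated by `W ∩ K`. -/
def GoodS (W : Set G) (K : Subgroup G) : Prop :=
  Subgroup.closure (W ∩ (K : Set G)) = K

lemma goodS_of_le {W : Set G} {K : Subgroup G}
    (h : K ≤ Subgroup.closure (W ∩ (K : Set G))) : GoodS W K :=
  le_antisymm ((Subgroup.closure_le _).mpr Set.inter_subset_right) h

lemma goodS_bot (W : Set G) : GoodS W (⊥ : Subgroup G) :=
  goodS_of_le bot_le

/-- Chain with cyclic quotients from `A` down to `B`, all of whose members are
generated by their intersection with `W`. -/
def CChain (W : Set G) (A B : Subgroup G) : Prop :=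
  ∃ m : ℕ, ∃ N : Fin (m + 1) → Subgroup G,
    N 0 = A ∧ N (Fin.last m) = B ∧
    (∀ j : Fin m, NormalWithCyclicQuotient (N j.succ) (N j.castSucc)) ∧
    ∀ j, GoodS W (N j)

lemma CChain.refl {W : Set G} {A : Subgroup G} (hA : GoodS W A) : CChain W A A :=
  ⟨0, fun _ => A, rfl, rfl, fun j => j.elim0, fun _ => hA⟩

lemma CChain.single {W : Set G} {A B : Subgroup G} (hA : GoodS W A) (hB : GoodS W B)
    (hAB : NormalWithCyclicQuotient B A) : CChain W A B := by
  refine ⟨1, fun j => if (j : ℕ) = 0 then A else B, by simp, by simp [Fin.last], ?_, ?_⟩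
  · intro j
    have hj : (j : ℕ) = 0 := by omega
    have h1 : ((j.castSucc : Fin 2) : ℕ) = 0 := by simpa using hj
    have h2 : ((j.succ : Fin 2) : ℕ) = 1 := by simp [hj]
    simp only [h1, h2]
    simpa using hAB
  · intro j
    by_cases h : (j : ℕ) = 0 <;> simp [h, hA, hB]

lemma CChain.trans {W : Set G} {A B C : Subgroup G}
    (h1 : CChain W A B) (h2 : CChain W B C) : CChain W A C := by
  obtain ⟨m1, N1, h10, h1l, h1s, h1g⟩ := h1
  obtain ⟨m2, N2, h20, h2l, h2s, h2g⟩ := h2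
  refine ⟨m1 + m2, fun j =>
    if h : (j : ℕ) < m1 then N1 ⟨j, by omega⟩ else N2 ⟨(j : ℕ) - m1, by omega⟩,
    ?_, ?_, ?_, ?_⟩
  · by_cases h : 0 < m1
    · simpa [h] using h10
    · have hm1 : m1 = 0 := by omega
      have hAB : A = B := by
        subst hm1
        rw [← h10, ← h1l]
        rfl
      simp only [Fin.val_zero, h, dif_neg (by omega : ¬ (0 : ℕ) < m1)]
      rw [hAB, ← h20]
      congr 1
      ext
      simp [h]
  · have h : ¬ ((Fin.last (m1 + m2) : ℕ) < m1) := by simp [Fin.last]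
    simp only [dif_neg h]
    rw [← h2l]
    congr 1
    ext
    simp [Fin.last]
  · intro j
    have hcs : ((j.castSucc : Fin (m1 + m2 + 1)) : ℕ) = (j : ℕ) := by simp
    have hsc : ((j.succ : Fin (m1 + m2 + 1)) : ℕ) = (j : ℕ) + 1 := by simp
    by_cases hj1 : (j : ℕ) + 1 < m1
    · have hj0 : (j : ℕ) < m1 := by omega
      simp only [hcs, hsc, dif_pos hj0, dif_pos hj1]
      have := h1s ⟨(j : ℕ), hj0⟩
      simpa [Fin.succ, Fin.castSucc, Fin.castAdd, Fin.castLE] using this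
    · by_cases hj0 : (j : ℕ) < m1
      · -- j + 1 = m1
        have hje : (j : ℕ) + 1 = m1 := by omega
        simp only [hcs, hsc, dif_pos hj0, dif_neg hj1]
        have := h1s ⟨(j : ℕ), hj0⟩
        have heq1 : N1 (Fin.succ ⟨(j : ℕ), hj0⟩) = N2 ⟨(j : ℕ) + 1 - m1, by omega⟩ := by
          have e1 : Fin.succ ⟨(j : ℕ), hj0⟩ = Fin.last m1 := by
            ext; simp [Fin.last, hje]
          rw [e1, h1l, ← h20]
          congr 1
          ext
          simp [hje]
        have heq2 : N1 (Fin.castSucc ⟨(j : ℕ), hj0⟩) = N1 ⟨(j : ℕ), by omega⟩ := rfl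
        rw [← heq1]
        exact this
      · simp only [hcs, hsc, dif_neg hj0, dif_neg hj1]
        have := h2s ⟨(j : ℕ) - m1, by omega⟩
        have e1 : N2 (Fin.succ ⟨(j : ℕ) - m1, by omega⟩) = N2 ⟨(j : ℕ) + 1 - m1, by omega⟩ := by
          congr 1
          ext
          simp [Fin.succ]
          omega
        have e2 : N2 (Fin.castSucc ⟨(j : ℕ) - m1, by omega⟩) = N2 ⟨(j : ℕ) - m1, by omega⟩ := rfl
        rw [← e1]
        exact this
  · intro j
    by_cases h : (j : ℕ) < m1
    · simp only [dif_pos h]; exact h1g _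
    · simp only [dif_neg h]; exact h2g _

/-- The abelian-refinement step: if all commutators of `H` lie in `K ≤ H` and both are
generated by their intersections with `W`, there is a cyclic chain from `H` to `K`. -/
lemma abelian_refine [Finite G] (W : Set G) (H K : Subgroup G) (hKH : K ≤ H)
    (hcomm : ∀ a ∈ H, ∀ b ∈ H, a * b * a⁻¹ * b⁻¹ ∈ K)
    (hGH : GoodS W H) (hGK : GoodS W K) : CChain W H K := by
  classical
  have hfin : (W ∩ (H : Set G)).Finite := Set.toFinite _
  set T : List G := hfin.toFinset.toList with hT
  have hTmem : ∀ x ∈ T, x ∈ W ∩ (H : Set G) := by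
    intro x hx
    rw [hT, Finset.mem_toList, Set.Finite.mem_toFinset] at hx
    exact hx
  have hTall : ∀ x ∈ W ∩ (H : Set G), x ∈ T := by
    intro x hx
    rw [hT, Finset.mem_toList, Set.Finite.mem_toFinset]
    exact hx
  set F : List G → Subgroup G := fun l => Subgroup.closure {x | x ∈ l} ⊔ K with hF
  have hFle : ∀ l : List G, (∀ x ∈ l, x ∈ W ∩ (H : Set G)) → F l ≤ H := by
    intro l hl
    refine sup_le ?_ hKH
    rw [Subgroup.closure_le]
    intro x hx
    exact (hl x hx).2
  have hFgood : ∀ l : List G, (∀ x ∈ l, x ∈ W ∩ (H : Set G)) → GoodS W (F l) := by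
    intro l hl
    apply goodS_of_le
    refine sup_le ?_ ?_
    · apply (Subgroup.closure_le _).mpr ?_ |>.trans (le_refl _)
      intro x hx
      apply Subgroup.subset_closure
      exact ⟨(hl x hx).1, Subgroup.mem_sup_left (Subgroup.subset_closure hx)⟩
    · calc K ≤ Subgroup.closure (W ∩ (K : Set G)) := le_of_eq hGK.symm
      _ ≤ _ := Subgroup.closure_mono (Set.inter_subset_inter_right _
          (by intro x hx; exact Subgroup.mem_sup_right hx))
  have hchain : ∀ l : List G, (∀ x ∈ l, x ∈ W ∩ (H : Set G)) → CChain W (F l) K := by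
    intro l
    induction l with
    | nil =>
      intro _
      have : F [] = K := by
        rw [hF]
        simp only [List.not_mem_nil, Set.setOf_false, Subgroup.closure_empty, bot_sup_eq]
      rw [this]
      exact CChain.refl hGK
    | cons z l ih =>
      intro hl
      have hzl : z ∈ W ∩ (H : Set G) := hl z (List.mem_cons_self)
      have hl' : ∀ x ∈ l, x ∈ W ∩ (H : Set G) := fun x hx => hl x (List.mem_cons_of_mem _ hx)
      have hdecomp : F (z :: l) = Subgroup.zpowers z ⊔ F l := by
        rw [hF]
        simp only
        rw [show {x : G | x ∈ z :: l} = {z} ∪ {x | x ∈ l} from by ext x; simp,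
          Subgroup.closure_union, Subgroup.zpowers_eq_closure, sup_assoc]
      have hstep : NormalWithCyclicQuotient (F l) (Subgroup.zpowers z ⊔ F l) :=
        cyclicStep H K (F l) z hzl.2 le_sup_right (hFle l hl') hcomm
      have hgood1 : GoodS W (F (z :: l)) := hFgood _ hl
      have hgood2 : GoodS W (F l) := hFgood _ hl'
      refine CChain.trans ?_ (ih hl')
      rw [hdecomp]
      exact CChain.single (hdecomp ▸ hgood1) hgood2 hstep
  have hFT : F T = H := by
    have hset : {x : G | x ∈ T} = W ∩ (H : Set G) := by
      ext x
      constructor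
      · exact fun hx => hTmem x hx
      · exact fun hx => hTall x hx
    rw [hF]
    simp only
    rw [hset, hGH]
    exact sup_of_le_left hKH
  have := hchain T hTmem
  rwa [hFT] at this

end Main

/-! ### The main theorem -/

open Subgroup Function

/-- for a finite solvable group, `X*` is a polycyclic generating set of
the normal closure of `Δ`: there is a chain from `ncl(Δ)` to `1` with cyclic quotients
in which every member is generated by its intersection with `X*`. -/
theorem pcc_star_polycyclic_generating_set
    (G : Type*) [Group G] [Fintype G] [Group.IsSolvable G]
    (Sig : Set G) (hgen : Subgroup.closure Sig = ⊤) (Δ : Set G) :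
    ∃ (m : ℕ) (N : Fin (m + 1) → Subgroup G),
      N 0 = Subgroup.normalClosure Δ ∧
      N (Fin.last m) = ⊥ ∧
      (∀ j : Fin m, NormalWithCyclicQuotient (N j.succ) (N j.castSucc)) ∧
      (∀ j : Fin (m + 1), Subgroup.closure
          (pccStar ({1} ∪ ProdLE Sig (Nat.clog 2 (Fintype.card G))) Δ ∩ (N j : Set G))
        = N j) := by
  classical
  set k := Nat.clog 2 (Fintype.card G) with hkdef
  set Hs : Set G := {1} ∪ ProdLE Sig k with hHs
  set W : Set G := pccStar Hs Δ with hW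
  have hk : Nat.card G ≤ 2 ^ k := by
    rw [Nat.card_eq_fintype_card]
    exact Nat.le_pow_clog one_lt_two _
  have h1Hs : (1 : G) ∈ Hs := Set.mem_union_left _ rfl
  -- the base sets Y_i
  set Yf : ℕ → Set G := fun i => Nat.rec Δ (fun i _ => commConjSet Hs (pccSeq Hs Δ i)) i with hYf
  have hXY : ∀ i, pccSeq Hs Δ i = conjSet Hs (Yf i) := by
    intro i
    cases i with
    | zero => rfl
    | succ i => rfl
  have hXsubW : ∀ i, pccSeq Hs Δ i ⊆ W := fun i => Set.subset_iUnion (pccSeq Hs Δ) i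
  -- closure of X i is the normal closure of Y i
  have hclX : ∀ i, Subgroup.closure (pccSeq Hs Δ i) = Subgroup.normalClosure (Yf i) := by
    intro i
    rw [hXY i]
    exact closure_conjSet_eq_normalClosure Sig hgen k hk (Yf i)
  haveI hclXn : ∀ i, (Subgroup.closure (pccSeq Hs Δ i)).Normal := by
    intro i
    rw [hclX i]
    exact Subgroup.normalClosure_normal
  -- the subgroups M i
  set M : ℕ → Subgroup G := fun j => ⨆ l : ℕ, Subgroup.closure (pccSeq Hs Δ (j + l)) with hM
  have hMn : ∀ j, (M j).Normal := by
    intro j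
    exact normal_iSup_of_normal _ (fun l => hclXn (j + l))
  have hXleM : ∀ j l, Subgroup.closure (pccSeq Hs Δ (j + l)) ≤ M j := by
    intro j l
    exact le_iSup (fun l => Subgroup.closure (pccSeq Hs Δ (j + l))) l
  have hXleM0 : ∀ j, Subgroup.closure (pccSeq Hs Δ j) ≤ M j := by
    intro j
    have := hXleM j 0
    simpa using this
  have hMle : ∀ j, M (j + 1) ≤ M j := by
    intro j
    refine iSup_le ?_
    intro l
    have h := hXleM j (l + 1)
    rwa [show j + (l + 1) = j + 1 + l from by omega] at h
  have hMsup : ∀ j, M j = Subgroup.closure (pccSeq Hs Δ j) ⊔ M (j + 1) := by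
    intro j
    refine le_antisymm ?_ (sup_le (hXleM0 j) (hMle j))
    refine iSup_le ?_
    intro l
    cases l with
    | zero => simpa using le_sup_left
    | succ l =>
      refine le_trans ?_ le_sup_right
      have h := hXleM (j + 1) l
      rwa [show j + 1 + l = j + (l + 1) from by omega] at h
  have hGoodM : ∀ j, GoodS W (M j) := by
    intro j
    apply goodS_of_le
    refine iSup_le ?_
    intro l
    rw [Subgroup.closure_le]
    intro x hx
    apply Subgroup.subset_closure
    exact ⟨hXsubW _ hx, hXleM j l (Subgroup.subset_closure hx)⟩
  -- each level gives a chain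
  have hlevel : ∀ i, CChain W (M i) (M (i + 1)) := by
    intro i
    haveI := hMn (i + 1)
    -- y ∈ Y i is itself in X i
    have hYX : Yf i ⊆ pccSeq Hs Δ i := by
      rw [hXY i]
      exact subset_conjSet_self h1Hs (Yf i)
    -- the commutator relations modulo M (i+1)
    have hyK : ∀ y ∈ Yf i, ∀ h ∈ Hs, y⁻¹ * (h⁻¹ * y * h)⁻¹ * y * (h⁻¹ * y * h) ∈ M (i + 1) := by
      intro y hy h hh
      have h1 : y ∈ pccSeq Hs Δ i := hYX hy
      have h2 : y⁻¹ * (h⁻¹ * y * h)⁻¹ * y * (h⁻¹ * y * h) ∈ commConjSet Hs (pccSeq Hs Δ i) :=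
        ⟨y, h1, h, hh, rfl⟩
      have h3 : y⁻¹ * (h⁻¹ * y * h)⁻¹ * y * (h⁻¹ * y * h) ∈ pccSeq Hs Δ (i + 1) := by
        show _ ∈ conjSet Hs (commConjSet Hs (pccSeq Hs Δ i))
        exact subset_conjSet_self h1Hs _ h2
      exact hXleM0 (i + 1) (Subgroup.subset_closure h3)
    have hyC : ∀ y ∈ Yf i, ∀ a ∈ Subgroup.normalClosure {y}, ∀ b ∈ Subgroup.normalClosure {y},
        a * b * a⁻¹ * b⁻¹ ∈ M (i + 1) := by
      intro y hy
      exact ncl_commutator_mem Sig hgen k hk (M (i + 1)) y (hyK y hy)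
    -- finite list of Y i
    have hfin : (Yf i).Finite := Set.toFinite _
    set L : List G := hfin.toFinset.toList with hL
    have hLY : ∀ y ∈ L, y ∈ Yf i := by
      intro y hy
      rwa [hL, Finset.mem_toList, Set.Finite.mem_toFinset] at hy
    have hYL : ∀ y ∈ Yf i, y ∈ L := by
      intro y hy
      rwa [hL, Finset.mem_toList, Set.Finite.mem_toFinset]
    set E : List G → Subgroup G :=
      fun l => l.foldr (fun y K => Subgroup.normalClosure {y} ⊔ K) (M (i + 1)) with hE
    have hEbase : ∀ l : List G, M (i + 1) ≤ E l := by
      intro l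
      induction l with
      | nil => exact le_refl _
      | cons y l ih => exact le_trans ih le_sup_right
    have hEmem : ∀ (l : List G) (y : G), y ∈ l → Subgroup.normalClosure {y} ≤ E l := by
      intro l
      induction l with
      | nil => intro y hy; simp at hy
      | cons z l ih =>
        intro y hy
        rcases List.mem_cons.mp hy with rfl | hy'
        · exact le_sup_left
        · exact le_trans (ih y hy') le_sup_right
    have hEnormal : ∀ l : List G, (E l).Normal := by
      intro l
      induction l with
      | nil => exact hMn (i + 1)
      | cons y l ih =>
        haveI := ih
        haveI : (Subgroup.normalClosure {y}).Normal := Subgroup.normalClosure_normal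
        exact Subgroup.sup_normal _ _
    have hncl_le : ∀ y ∈ Yf i, Subgroup.normalClosure {y} ≤ M i := by
      intro y hy
      have h1 : Subgroup.normalClosure {y} = Subgroup.closure (conjSet Hs {y}) :=
        (closure_conjSet_eq_normalClosure Sig hgen k hk {y}).symm
      have hsub : conjSet Hs {y} ⊆ pccSeq Hs Δ i := by
        rw [hXY i]
        exact conjSet_mono_x (Set.singleton_subset_iff.mpr hy)
      rw [h1]
      exact le_trans (Subgroup.closure_mono hsub) (hXleM0 i)
    have hEle : ∀ l : List G, (∀ y ∈ l, y ∈ Yf i) → E l ≤ M i := by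
      intro l
      induction l with
      | nil => intro _; exact hMle i
      | cons y l ih =>
        intro hl
        refine sup_le (hncl_le y (hl y (List.mem_cons_self))) (ih fun x hx => hl x (List.mem_cons_of_mem _ hx))
    have hEgood : ∀ l : List G, (∀ y ∈ l, y ∈ Yf i) → GoodS W (E l) := by
      intro l
      induction l with
      | nil => intro _; exact hGoodM (i + 1)
      | cons y l ih =>
        intro hl
        have hyY := hl y (List.mem_cons_self)
        have hl' := fun x hx => hl x (List.mem_cons_of_mem _ hx)
        apply goodS_of_le
        refine sup_le ?_ ?_
        · rw [show Subgroup.normalClosure {y} = Subgroup.closure (conjSet Hs {y}) from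
            (closure_conjSet_eq_normalClosure Sig hgen k hk {y}).symm, Subgroup.closure_le]
          intro x hx
          apply Subgroup.subset_closure
          constructor
          · apply hXsubW i
            rw [hXY i]
            exact conjSet_mono_x (Set.singleton_subset_iff.mpr hyY) hx
          · exact Subgroup.mem_sup_left (conjSet_subset_normalClosure Hs {y} hx)
        · calc E l ≤ Subgroup.closure (W ∩ (E l : Set G)) := le_of_eq (ih hl').symm
          _ ≤ _ := Subgroup.closure_mono (Set.inter_subset_inter_right _
              (fun x hx => Subgroup.mem_sup_right hx))
    have hchainE : ∀ l : List G, (∀ y ∈ l, y ∈ Yf i) → CChain W (E l) (M (i + 1)) := by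
      intro l
      induction l with
      | nil => intro _; exact CChain.refl (hGoodM (i + 1))
      | cons y l ih =>
        intro hl
        have hyY := hl y (List.mem_cons_self)
        have hl' := fun x hx => hl x (List.mem_cons_of_mem _ hx)
        refine CChain.trans ?_ (ih hl')
        haveI := hEnormal l
        have hcm : ∀ a ∈ Subgroup.normalClosure {y} ⊔ E l, ∀ b ∈ Subgroup.normalClosure {y} ⊔ E l,
            a * b * a⁻¹ * b⁻¹ ∈ E l := by
          have base : ∀ a ∈ Subgroup.normalClosure {y}, ∀ b ∈ Subgroup.normalClosure {y},
              a * b * a⁻¹ * b⁻¹ ∈ E l := by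
            intro a ha b hb
            exact hEbase l (hyC y hyY a ha b hb)
          exact sup_commutator_mem (E l) (Subgroup.normalClosure {y}) base
        exact abelian_refine W (Subgroup.normalClosure {y} ⊔ E l) (E l) le_sup_right hcm
          (hEgood (y :: l) hl) (hEgood l hl')
    have hEL : E L = M i := by
      refine le_antisymm (hEle L hLY) ?_
      rw [hMsup i]
      refine sup_le ?_ (hEbase L)
      rw [Subgroup.closure_le, hXY i]
      rintro x ⟨y, hy, h, hh, rfl⟩
      have h1 : h⁻¹ * y * h ∈ Subgroup.normalClosure {y} :=
        conjSet_subset_normalClosure Hs {y} ⟨y, rfl, h, hh, rfl⟩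
      exact hEmem L y (hYL y hy) h1
    have := hchainE L hLY
    rwa [hEL] at this
  -- derived series bound
  have hXder : ∀ i, pccSeq Hs Δ i ⊆ (derivedSeries G i : Set G) := by
    intro i
    induction i with
    | zero => intro x _; simp [derivedSeries]
    | succ i ih =>
      rintro x ⟨c, ⟨g, hg, h', hh', rfl⟩, h, hh, rfl⟩
      have hgi : g ∈ derivedSeries G i := ih hg
      haveI : (derivedSeries G i).Normal := derivedSeries_normal G i
      have hconj : h'⁻¹ * g * h' ∈ derivedSeries G i := by
        have := ‹(derivedSeries G i).Normal›.conj_mem g hgi h'⁻¹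
        simpa using this
      have hc : g⁻¹ * (h'⁻¹ * g * h')⁻¹ * g * (h'⁻¹ * g * h') ∈ derivedSeries G (i + 1) := by
        rw [derivedSeries_succ]
        have := Subgroup.commutator_mem_commutator (inv_mem hgi) (inv_mem hconj)
        open scoped commutatorElement in
        rwa [show ⁅g⁻¹, (h'⁻¹ * g * h')⁻¹⁆ =
          g⁻¹ * (h'⁻¹ * g * h')⁻¹ * g * (h'⁻¹ * g * h') from by
            rw [commutatorElement_def]; group] at this
      haveI : (derivedSeries G (i + 1)).Normal := derivedSeries_normal G (i + 1)
      have := ‹(derivedSeries G (i + 1)).Normal›.conj_mem _ hc h⁻¹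
      simpa using this
  obtain ⟨n, hn⟩ := Group.IsSolvable.solvable (G := G)
  have hder_anti : ∀ l, derivedSeries G (n + l) ≤ derivedSeries G n := by
    intro l
    induction l with
    | zero => exact le_refl _
    | succ l ih =>
      refine le_trans ?_ ih
      rw [show n + (l + 1) = (n + l) + 1 from rfl, derivedSeries_succ]
      haveI : (derivedSeries G (n + l)).Normal := derivedSeries_normal G (n + l)
      exact Subgroup.commutator_le_left _ _
  have hMn_bot : M n = ⊥ := by
    rw [eq_bot_iff]
    refine iSup_le ?_
    intro l
    rw [Subgroup.closure_le]
    intro x hx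
    have h1 : x ∈ derivedSeries G (n + l) := hXder (n + l) hx
    have h2 : x ∈ derivedSeries G n := hder_anti l h1
    rw [hn] at h2
    exact h2
  -- M 0 = normalClosure Δ
  have hclX_desc : ∀ i, Subgroup.closure (pccSeq Hs Δ (i + 1)) ≤ Subgroup.closure (pccSeq Hs Δ i) := by
    intro i
    rw [hclX (i + 1)]
    haveI := hclXn i
    apply Subgroup.normalClosure_le_normal
    show Yf (i + 1) ⊆ (Subgroup.closure (pccSeq Hs Δ i) : Set G)
    rintro x ⟨g, hg, h, hh, rfl⟩
    have hgC : g ∈ Subgroup.closure (pccSeq Hs Δ i) := Subgroup.subset_closure hg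
    have hconj : h⁻¹ * g * h ∈ Subgroup.closure (pccSeq Hs Δ i) := by
      have := (hclXn i).conj_mem g hgC h⁻¹
      simpa using this
    exact mul_mem (mul_mem (mul_mem (inv_mem hgC) (inv_mem hconj)) hgC) hconj
  have hclX_le0 : ∀ i, Subgroup.closure (pccSeq Hs Δ i) ≤ Subgroup.closure (pccSeq Hs Δ 0) := by
    intro i
    induction i with
    | zero => exact le_refl _
    | succ i ih => exact le_trans (hclX_desc i) ih
  have hM0 : M 0 = Subgroup.normalClosure Δ := by
    have h0 : Subgroup.closure (pccSeq Hs Δ 0) = Subgroup.normalClosure Δ := hclX 0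
    refine le_antisymm ?_ ?_
    · refine iSup_le ?_
      intro l
      have := hclX_le0 (0 + l)
      rw [h0] at this
      exact this
    · rw [← h0]
      exact hXleM0 0
  -- downward induction
  have hdown : ∀ d : ℕ, CChain W (M (n - d)) ⊥ := by
    intro d
    induction d with
    | zero =>
      rw [Nat.sub_zero, hMn_bot]
      exact CChain.refl (goodS_bot W)
    | succ d ih =>
      by_cases hdn : n ≤ d
      · rwa [show n - (d + 1) = n - d from by omega]
      · have hstep := hlevel (n - (d + 1))
        rw [show n - (d + 1) + 1 = n - d from by omega] at hstep
        exact CChain.trans hstep ih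
  have hfinal := hdown n
  rw [Nat.sub_self, hM0] at hfinal
  obtain ⟨m, N, hN0, hNl, hNs, hNg⟩ := hfinal
  exact ⟨m, N, hN0, hNl, hNs, fun j => hNg j⟩
end

section
/- Let S be a finite normal band of groups, with partition S = ⋃_{α∈B} S_α indexed by a finite normal band B, where each S_α is a group with identity element e_α, and let Σ ⊆ S generate S. Then for every α ∈ B, the group S_α is generated, as a semigroup, by the set Σ_α = { e_α·s·e_α : s ∈ Σ^{≤2} and e_α = u·s·v for some u, v ∈ S ∪ {1} }. -/
namespace NBG

private def powAux {S : Type*} [Semigroup S] (g : S) : ℕ → S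
  | 0 => g
  | n + 1 => powAux g n * g

private lemma powAux_succ {S : Type*} [Semigroup S] (g : S) (n : ℕ) :
    powAux g (n + 1) = powAux g n * g := rfl

private lemma powAux_add {S : Type*} [Semigroup S] (g : S) (m n : ℕ) :
    powAux g (m + n + 1) = powAux g m * powAux g n := by
  induction n with
  | zero => rfl
  | succ n ih =>
      have h1 : m + (n + 1) + 1 = (m + n + 1) + 1 := by omega
      rw [show powAux g (m + (n+1) + 1) = powAux g (m + n + 1) * g from by rw [h1, powAux_succ]]
      rw [ih, powAux_succ, mul_assoc]

private lemma powAux_comm {S : Type*} [Semigroup S] (g : S) (n : ℕ) :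
    g * powAux g n = powAux g n * g := by
  induction n with
  | zero => rfl
  | succ n ih => rw [powAux_succ, ← mul_assoc, ih]

section Band

variable {B : Type*} [Semigroup B]

private lemma bsw (hnormal : ∀ a x y b : B, a * x * y * b = a * y * x * b)
    (a x y c : B) : a * (x * (y * c)) = a * (y * (x * c)) := by
  have h := hnormal a x y c
  simpa only [mul_assoc] using h

private lemma bdup (hband : ∀ b : B, b * b = b) (x c : B) : x * (x * c) = x * c := by
  rw [← mul_assoc, hband]

/-- if α = u*g*v then α*g*α = α -/
private lemma bandTT (hband : ∀ b : B, b * b = b)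
    (hnormal : ∀ a x y b : B, a * x * y * b = a * y * x * b)
    (u g v : B) : (u * g * v) * g * (u * g * v) = u * g * v := by
  have e1 : u * (g * (v * (g * (u * (g * v))))) = u * (v * (g * (u * v))) := by
    rw [bsw hnormal u g v (g * (u * (g * v)))]
    rw [bdup hband g (u * (g * v))]
    rw [bsw hnormal g u g v]
    rw [bdup hband g (u * v)]
  have e2 : u * (g * (v * (u * (g * v)))) = u * (v * (g * (u * v))) := by
    rw [bsw hnormal u g v (u * (g * v))]
    rw [bsw hnormal g u g v]
    rw [bdup hband g (u * v)]
  calc (u * g * v) * g * (u * g * v) = u * (g * (v * (g * (u * (g * v))))) := by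
        simp only [mul_assoc]
  _ = u * (v * (g * (u * v))) := e1
  _ = u * (g * (v * (u * (g * v)))) := e2.symm
  _ = (u * g * v) * (u * g * v) := by simp only [mul_assoc]
  _ = u * g * v := hband _

private lemma bandcL (hband : ∀ b : B, b * b = b) (u g : B) :
    (u * g) * g * (u * g) = u * g := by
  rw [mul_assoc u g g, hband, hband]

private lemma bandcR (hband : ∀ b : B, b * b = b) (g v : B) :
    (g * v) * g * (g * v) = g * v := by
  rw [mul_assoc (g * v) g (g * v), bdup hband g v, hband]

variable {a b g d : B}

/-- hB for absorb -/
private lemma bandG0 (hα : a * (b * (g * (d * a))) = a) : a * b * g * (d * a) = a := by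
  simp only [mul_assoc]; exact hα

/-- COND for shorter word -/
private lemma bandG1 (hband : ∀ b : B, b * b = b)
    (hnormal : ∀ a x y b : B, a * x * y * b = a * y * x * b)
    (hα : a * (b * (g * (d * a))) = a) : a * (b * g) * a = a := by
  have key : a * (b * (g * a)) = a := by
    conv_lhs => rw [show g * a = g * (a * (b * (g * (d * a)))) from by rw [hα]]
    rw [bsw hnormal b g a (b * (g * (d * a)))]
    rw [bsw hnormal a b a (g * (b * (g * (d * a))))]
    rw [bdup hband a (b * (g * (b * (g * (d * a)))))]
    rw [bsw hnormal b g b (g * (d * a))]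
    rw [bdup hband b (g * (g * (d * a)))]
    rw [bdup hband g (d * a)]
    exact hα
  calc a * (b * g) * a = a * (b * (g * a)) := by simp only [mul_assoc]
  _ = a := key

private lemma bandG2 (hband : ∀ b : B, b * b = b)
    (hnormal : ∀ a x y b : B, a * x * y * b = a * y * x * b)
    (hα : a * (b * (g * (d * a))) = a) : a * g * a = a := by
  have key : a * (g * a) = a := by
    conv_lhs => rw [show g * a = g * (a * (b * (g * (d * a)))) from by rw [hα]]
    rw [bsw hnormal a g a (b * (g * (d * a)))]
    rw [bdup hband a (g * (b * (g * (d * a))))]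
    rw [bsw hnormal a g b (g * (d * a))]
    rw [bdup hband g (d * a)]
    exact hα
  rw [mul_assoc]; exact key

private lemma bandG3 (hband : ∀ b : B, b * b = b)
    (hnormal : ∀ a x y b : B, a * x * y * b = a * y * x * b)
    (hα : a * (b * (g * (d * a))) = a) : a * (g * d) * a = a := by
  have key : a * (g * (d * a)) = a := by
    conv_lhs => rw [show d * a = d * (a * (b * (g * (d * a)))) from by rw [hα]]
    -- a g d a b g d a
    rw [bsw hnormal g d a (b * (g * (d * a)))]
    -- a g a d b g d a
    rw [bsw hnormal a g a (d * (b * (g * (d * a))))]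
    -- a a g d b g d a
    rw [bdup hband a (g * (d * (b * (g * (d * a)))))]
    -- a g d b g d a
    rw [bsw hnormal g d b (g * (d * a))]
    -- a g b d g d a
    rw [bsw hnormal a g b (d * (g * (d * a)))]
    -- a b g d g d a
    rw [bsw hnormal g d g (d * a)]
    -- a b g g d d a
    rw [bdup hband g (d * (d * a))]
    rw [bdup hband d a]
    exact hα
  calc a * (g * d) * a = a * (g * (d * a)) := by simp only [mul_assoc]
  _ = a := key

/-- hA for absorb -/
private lemma bandG4 (hband : ∀ b : B, b * b = b)
    (hnormal : ∀ a x y b : B, a * x * y * b = a * y * x * b)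
    (hα : a * (b * (g * (d * a))) = a) : a * b * g * (a * g) * (d * a) = a := by
  have key : a * (b * (g * (a * (g * (d * a))))) = a := by
    rw [bsw hnormal b g a (g * (d * a))]
    -- a b a g g d a
    rw [bdup hband g (d * a)]
    -- a b a g d a
    rw [bsw hnormal a b a (g * (d * a))]
    -- a a b g d a
    rw [bdup hband a (b * (g * (d * a)))]
    exact hα
  calc a * b * g * (a * g) * (d * a) = a * (b * (g * (a * (g * (d * a))))) := by
        simp only [mul_assoc]
  _ = a := key

/-- hW for absorb (no hα needed) -/
private lemma bandG5 (hband : ∀ b : B, b * b = b)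
    (hnormal : ∀ a x y b : B, a * x * y * b = a * y * x * b)
    (a b g d : B) : d * a * a * (a * b * g) * (a * g) = d * a * a * (a * b * g) := by
  have e1 : d * (a * (a * (a * (b * (g * (a * g)))))) = d * (a * (b * g)) := by
    rw [bdup hband a (a * (b * (g * (a * g))))]
    rw [bdup hband a (b * (g * (a * g)))]
    rw [bsw hnormal b g a g]
    -- d a b a g g
    rw [hband g]
    -- d a b a g
    rw [bsw hnormal a b a g]
    -- d a a b g
    rw [bdup hband a (b * g)]
  have e2 : d * (a * (a * (a * (b * g)))) = d * (a * (b * g)) := by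
    rw [bdup hband a (a * (b * g))]
    rw [bdup hband a (b * g)]
  calc d * a * a * (a * b * g) * (a * g) = d * (a * (a * (a * (b * (g * (a * g)))))) := by
        simp only [mul_assoc]
  _ = d * (a * (b * g)) := e1
  _ = d * (a * (a * (a * (b * g)))) := e2.symm
  _ = d * a * a * (a * b * g) := by simp only [mul_assoc]

end Band

end NBG


namespace NBG2

section Semi

variable {S : Type*} {B : Type*} [Semigroup S] [Semigroup B]
variable (π : S →ₙ* B) (e : B → S)


/-- right absorption of an idempotent -/
private lemma absR (he : ∀ b : B, π (e b) = b)
    (hid : ∀ s : S, e (π s) * s = s ∧ s * e (π s) = s)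
    (hinv : ∀ s : S, ∃ s' : S, π s' = π s ∧ s * s' = e (π s) ∧ s' * s = e (π s))
    (W h : S) (hh : h * h = h) (hWh : π W * π h = π W) : W * h = W := by
  obtain ⟨m', hπm', hmm', hm'm⟩ := hinv (e (π W) * h)
  have hπm : π (e (π W) * h) = π W := by rw [map_mul, he, hWh]
  rw [hπm] at hm'm
  have hmh : (e (π W) * h) * h = e (π W) * h := by rw [mul_assoc, hh]
  have heh : e (π W) * h = e (π W) := by
    calc e (π W) * h = (m' * (e (π W) * h)) * h := by rw [hm'm]
    _ = m' * ((e (π W) * h) * h) := by rw [mul_assoc]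
    _ = m' * (e (π W) * h) := by rw [hmh]
    _ = e (π W) := hm'm
  calc W * h = (W * e (π W)) * h := by rw [(hid W).2]
  _ = W * (e (π W) * h) := by rw [mul_assoc]
  _ = W * e (π W) := by rw [heh]
  _ = W := (hid W).2

/-- left absorption of an idempotent -/
private lemma absL (he : ∀ b : B, π (e b) = b)
    (hid : ∀ s : S, e (π s) * s = s ∧ s * e (π s) = s)
    (hinv : ∀ s : S, ∃ s' : S, π s' = π s ∧ s * s' = e (π s) ∧ s' * s = e (π s))
    (h z : S) (hh : h * h = h) (hhz : π h * π z = π z) : h * z = z := by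
  obtain ⟨m', hπm', hmm', hm'm⟩ := hinv (h * e (π z))
  have hπm : π (h * e (π z)) = π z := by rw [map_mul, he, hhz]
  rw [hπm] at hmm'
  have hmh : h * (h * e (π z)) = h * e (π z) := by rw [← mul_assoc, hh]
  have heh : h * e (π z) = e (π z) := by
    calc h * e (π z) = h * ((h * e (π z)) * m') := by rw [hmm']
    _ = (h * (h * e (π z))) * m' := by simp only [mul_assoc]
    _ = (h * e (π z)) * m' := by rw [hmh]
    _ = e (π z) := hmm'
  calc h * z = h * (e (π z) * z) := by rw [(hid z).1]
  _ = (h * e (π z)) * z := by rw [mul_assoc]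
  _ = e (π z) * z := by rw [heh]
  _ = z := (hid z).1

/-- an idempotent of the fiber over ε equals e ε -/
private lemma keyIdem (he : ∀ b : B, π (e b) = b)
    (hid : ∀ s : S, e (π s) * s = s ∧ s * e (π s) = s)
    (hinv : ∀ s : S, ∃ s' : S, π s' = π s ∧ s * s' = e (π s) ∧ s' * s = e (π s))
    (D : S) (ε : B) (hπ : π D = ε) (hDD : D * D = D) : D = e ε := by
  obtain ⟨D', hπD', hDD', hD'D⟩ := hinv D
  rw [hπ] at hD'D
  have h1 := (hid D).1
  rw [hπ] at h1
  calc D = e ε * D := h1.symm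
  _ = (D' * D) * D := by rw [hD'D]
  _ = D' * (D * D) := by rw [mul_assoc]
  _ = D' * D := by rw [hDD]
  _ = e ε := hD'D

/-- the key absorption lemma: an idempotent `m` can be dropped in context -/
private lemma absorb (he : ∀ b : B, π (e b) = b)
    (hid : ∀ s : S, e (π s) * s = s ∧ s * e (π s) = s)
    (hinv : ∀ s : S, ∃ s' : S, π s' = π s ∧ s * s' = e (π s) ∧ s' * s = e (π s))
    (α : B) (Y m Z : S)
    (hm : m * m = m)
    (hB : π Y * π Z = α)
    (hA : π Y * π m * π Z = α)
    (hW : π Z * α * π Y * π m = π Z * α * π Y)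
    (hαα : α * α = α) :
    Y * m * Z = Y * Z := by
  have hπB : π (Y * Z) = α := by rw [map_mul, hB]
  obtain ⟨B', hπB', hBB', hB'B⟩ := hinv (Y * Z)
  rw [hπB] at hπB' hBB' hB'B
  have hπA : π (Y * m * Z) = α := by rw [map_mul, map_mul, hA]
  have hWm : Z * B' * Y * m = Z * B' * Y := by
    refine absR π e he hid hinv (Z * B' * Y) m hm ?_
    rw [map_mul, map_mul, hπB']
    exact hW
  have hDD : (Y * m * Z * B') * (Y * m * Z * B') = Y * m * Z * B' := by
    have e1 : (Y * m * Z * B') * (Y * m * Z * B')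
        = Y * m * (Z * B' * Y * m) * (Z * B') := by simp only [mul_assoc]
    have e2 : Y * m * (Z * B' * Y) * (Z * B') = Y * m * Z * (B' * (Y * Z)) * B' := by
      simp only [mul_assoc]
    rw [e1, hWm, e2, hB'B]
    have h3 := (hid (Y * m * Z)).2
    rw [hπA] at h3
    rw [h3]
  have hπD : π (Y * m * Z * B') = α := by rw [map_mul, hπA, hπB', hαα]
  have hD : Y * m * Z * B' = e α := keyIdem π e he hid hinv _ α hπD hDD
  have h4 := (hid (Y * m * Z)).2
  rw [hπA] at h4
  have h5 := (hid (Y * Z)).1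
  rw [hπB] at h5
  calc Y * m * Z = Y * m * Z * e α := h4.symm
  _ = Y * m * Z * (B' * (Y * Z)) := by rw [hB'B]
  _ = (Y * m * Z * B') * (Y * Z) := by simp only [mul_assoc]
  _ = e α * (Y * Z) := by rw [hD]
  _ = Y * Z := h5

end Semi

end NBG2



private lemma listProd₁_append {S : Type*} [Semigroup S] (L₁ L₂ : List S) (a : S) :
    listProd₁ a (L₁ ++ L₂) = listProd₁ (listProd₁ a L₁) L₂ := by
  induction L₁ generalizing a with
  | nil => rfl
  | cons b L ih => exact ih (a * b)

private lemma listProd₁_mul {S : Type*} [Semigroup S] (M : List S) :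
    ∀ (x b : S), listProd₁ (x * b) M = x * listProd₁ b M := by
  induction M with
  | nil => intros; rfl
  | cons c M ih =>
    intro x b
    show listProd₁ (x * b * c) M = x * listProd₁ b (c :: M)
    rw [mul_assoc]
    exact ih x (b * c)

private lemma list_decomp {S : Type*} (L : List S) :
    L = [] ∨ (∃ b, L = [b]) ∨ ∃ M s t, L = M ++ [s, t] := by
  rcases hL : L.reverse with _ | ⟨t, M₁⟩
  · left
    have := congrArg List.reverse hL
    simpa using this
  rcases M₁ with _ | ⟨s, M₂⟩
  · right; left
    refine ⟨t, ?_⟩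
    have := congrArg List.reverse hL
    simpa using this
  · right; right
    refine ⟨M₂.reverse, s, t, ?_⟩
    have := congrArg List.reverse hL
    simpa using this




/-- in a finite normal band of groups (encoded by a surjective
homomorphism `π` onto a finite normal band `B` whose fibers are groups with
identities `e α`), each group fiber `S_α` is generated by
`Σ_α = { e_α·s·e_α : s ∈ Σ^{≤2}, e_α = u·s·v for some u, v ∈ S ∪ {1} }`. -/
theorem normal_band_of_groups_fiber_generators
    (S B : Type*) [Semigroup S] [Fintype S] [Semigroup B] [Fintype B]
    (π : S →ₙ* B) (e : B → S)
    (hsurj : Function.Surjective π)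
    (hband : ∀ b : B, b * b = b)
    (hnormal : ∀ a x y b : B, a * x * y * b = a * y * x * b)
    (he : ∀ α : B, π (e α) = α)
    (hid : ∀ s : S, e (π s) * s = s ∧ s * e (π s) = s)
    (hinv : ∀ s : S, ∃ s' : S, π s' = π s ∧ s * s' = e (π s) ∧ s' * s = e (π s))
    (Sig : Set S) (hgen : Subsemigroup.closure Sig = ⊤) (α : B) :
    (Subsemigroup.closure { x : S | ∃ s ∈ ProdLE Sig 2,
        (∃ u v : WithOne S, (e α : WithOne S) = u * (s : WithOne S) * v) ∧
        x = e α * s * e α } : Set S)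
      = { x : S | π x = α } := by
  set Gset : Set S := { x : S | ∃ s ∈ ProdLE Sig 2,
        (∃ u v : WithOne S, (e α : WithOne S) = u * (s : WithOne S) * v) ∧
        x = e α * s * e α } with hGset
  -- basic facts
  have hee : e α * e α = e α := by
    have h := (hid (e α)).1
    rwa [he] at h
  have hαα : α * α = α := hband α
  -- the fiber is a subsemigroup
  have hfib_mul : ∀ p q : S, π p = α → π q = α → π (p * q) = α := by
    intro p q hp hq; rw [map_mul, hp, hq, hαα]
  -- generator membership helper
  have mkGen : ∀ s : S, s ∈ ProdLE Sig 2 → α * π s * α = α →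
      e α * s * e α ∈ Subsemigroup.closure Gset := by
    intro s hs hcond
    apply Subsemigroup.subset_closure
    have hπm : π (e α * s * e α) = α := by
      rw [map_mul, map_mul, he]; exact hcond
    obtain ⟨m', hπm', hmm', hm'm⟩ := hinv (e α * s * e α)
    rw [hπm] at hmm'
    refine ⟨s, hs, ⟨⟨(e α : WithOne S), ((e α * m' : S) : WithOne S), ?_⟩, rfl⟩⟩
    have hSeq : (e α : S) = e α * s * (e α * m') := by
      rw [show e α * s * (e α * m') = (e α * s * e α) * m' from by simp only [mul_assoc]]
      rw [hmm']
    calc (e α : WithOne S) = ((e α * s * (e α * m') : S) : WithOne S) := by rw [← hSeq]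
    _ = (e α : WithOne S) * (s : WithOne S) * ((e α * m' : S) : WithOne S) := by push_cast; rfl
  -- main induction
  have main : ∀ n : ℕ, ∀ (a : S) (L : List S), L.length ≤ n → a ∈ Sig →
      (∀ y ∈ L, y ∈ Sig) → α * π (listProd₁ a L) * α = α →
      e α * listProd₁ a L * e α ∈ Subsemigroup.closure Gset := by
    intro n
    induction n with
    | zero =>
      intro a L hlen ha hL hcond
      have hL0 : L = [] := List.length_eq_zero_iff.mp (Nat.le_zero.mp hlen)
      subst hL0
      exact mkGen a ⟨a, [], ha, by simp, by norm_num, rfl⟩ hcond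
    | succ n ih =>
      intro a L hlen ha hL hcond
      rcases list_decomp L with rfl | ⟨b, rfl⟩ | ⟨M, s₀, t₀, rfl⟩
      · exact mkGen a ⟨a, [], ha, by simp, by norm_num, rfl⟩ hcond
      · exact mkGen (a * b) ⟨a, [b], ha, by simpa using hL, by norm_num, rfl⟩ hcond
      · -- step case
        have hs₀ : s₀ ∈ Sig := hL s₀ (by simp)
        have ht₀ : t₀ ∈ Sig := hL t₀ (by simp)
        have hxL : listProd₁ a (M ++ [s₀, t₀]) = listProd₁ a M * s₀ * t₀ := by
          rw [listProd₁_append]; rfl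
        set u₀ := listProd₁ a M with hu₀def
        have hα : α * (π u₀ * (π s₀ * (π t₀ * α))) = α := by
          have h := hcond
          rw [hxL, map_mul, map_mul] at h
          simpa only [mul_assoc] using h
        -- the generator g₀ = e α * s₀ * e α and its quasi-inverse v₀
        have hcond₂ : α * π s₀ * α = α := NBG.bandG2 hband hnormal hα
        have hπg₀ : π (e α * s₀ * e α) = α := by
          rw [map_mul, map_mul, he]; exact hcond₂
        have hg₀H : e α * s₀ * e α ∈ Subsemigroup.closure Gset :=
          mkGen s₀ ⟨s₀, [], hs₀, by simp, by norm_num, rfl⟩ hcond₂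
        set g₀ := e α * s₀ * e α with hg₀def
        have hv : ∃ v₀ : S, v₀ ∈ Subsemigroup.closure Gset ∧ π v₀ = α ∧
            v₀ * g₀ = e α ∧ g₀ * v₀ = e α := by
          have hπpow : ∀ k, π (NBG.powAux g₀ k) = α := by
            intro k
            induction k with
            | zero => exact hπg₀
            | succ k ihk =>
              rw [NBG.powAux_succ, map_mul, ihk, hπg₀, hαα]
          have hHpow : ∀ k, NBG.powAux g₀ k ∈ Subsemigroup.closure Gset := by
            intro k
            induction k with
            | zero => exact hg₀H
            | succ k ihk => rw [NBG.powAux_succ]; exact mul_mem ihk hg₀H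
          obtain ⟨i, j, hij, hpow⟩ :=
            Finite.exists_ne_map_eq_of_infinite (fun k : ℕ => NBG.powAux g₀ k)
          have hkey : ∃ i d, 0 < d ∧ NBG.powAux g₀ i = NBG.powAux g₀ (i + d) := by
            rcases Nat.lt_or_ge i j with h | h
            · exact ⟨i, j - i, by omega, by rw [show i + (j - i) = j by omega]; exact hpow⟩
            · have h' : j < i := lt_of_le_of_ne h (Ne.symm hij)
              exact ⟨j, i - j, by omega,
                by rw [show j + (i - j) = i by omega]; exact hpow.symm⟩
          obtain ⟨i, d, hd, hstep⟩ := hkey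
          have hshift : ∀ k, NBG.powAux g₀ (i + k) = NBG.powAux g₀ (i + k + d) := by
            intro k
            induction k with
            | zero => simpa using hstep
            | succ k ihk =>
              have h1 : i + (k + 1) = (i + k) + 1 := by omega
              rw [h1, NBG.powAux_succ, ihk, ← NBG.powAux_succ]
              congr 1
              omega
          have hmult : ∀ k c, i ≤ c → NBG.powAux g₀ c = NBG.powAux g₀ (c + k * d) := by
            intro k
            induction k with
            | zero => intro c hc; simp
            | succ k ihk =>
              intro c hc
              have h1 := ihk c hc
              have h2 : NBG.powAux g₀ (c + k * d) = NBG.powAux g₀ (c + k * d + d) := by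
                have hle : i ≤ c + k * d := by omega
                obtain ⟨t, ht⟩ : ∃ t, c + k * d = i + t := ⟨c + k * d - i, by omega⟩
                rw [ht]; exact hshift t
              rw [h1, h2, show c + k * d + d = c + (k + 1) * d by ring]
          obtain ⟨Mi, hM1, hMge⟩ : ∃ Mi, Mi + 1 = (i + 1) * d ∧ i ≤ Mi := by
            have hpos : 0 < (i + 1) * d := Nat.mul_pos (by omega) hd
            have hle : i + 1 ≤ (i + 1) * d := by nlinarith
            exact ⟨(i + 1) * d - 1, by omega, by omega⟩
          have hidem : NBG.powAux g₀ Mi * NBG.powAux g₀ Mi = NBG.powAux g₀ Mi := by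
            rw [← NBG.powAux_add]
            rw [show Mi + Mi + 1 = Mi + (Mi + 1) by omega, hM1]
            exact (hmult (i + 1) Mi hMge).symm
          have hfMi : NBG.powAux g₀ Mi = e α :=
            NBG2.keyIdem π e he hid hinv _ α (hπpow Mi) hidem
          rcases Mi with _ | M'
          · -- Mi = 0 : g₀ = e α
            have hg₀f : g₀ = e α := hfMi
            exact ⟨g₀, hg₀H, hπg₀, by rw [hg₀f]; exact hee, by rw [hg₀f]; exact hee⟩
          · refine ⟨NBG.powAux g₀ M', hHpow M', hπpow M', ?_, ?_⟩
            · have : NBG.powAux g₀ (M' + 1) = e α := hfMi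
              rwa [NBG.powAux_succ] at this
            · have : NBG.powAux g₀ (M' + 1) = e α := hfMi
              rw [NBG.powAux_succ, ← NBG.powAux_comm] at this
              exact this
        obtain ⟨v₀, hv₀H, hπv₀, hvg, hgv⟩ := hv
        have hfv0 : e α * v₀ = v₀ :=
          NBG2.absL π e he hid hinv (e α) v₀ hee (by rw [he, hπv₀]; exact hαα)
        have hvf0 : v₀ * e α = v₀ :=
          NBG2.absR π e he hid hinv v₀ (e α) hee (by rw [he, hπv₀]; exact hαα)
        have hvsv : v₀ * s₀ * v₀ = v₀ := by
          have h1 : v₀ * (s₀ * v₀) = v₀ * (g₀ * v₀) := by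
            rw [hg₀def]
            simp only [mul_assoc]
            rw [hfv0]
            rw [← mul_assoc v₀ (e α) (s₀ * v₀), hvf0]
          have h2 : v₀ * (g₀ * v₀) = v₀ := by
            rw [← mul_assoc, hvg, hfv0]
          rw [mul_assoc, h1, h2]
        have hm : (v₀ * s₀) * (v₀ * s₀) = v₀ * s₀ := by
          have h1 : (v₀ * s₀) * (v₀ * s₀) = (v₀ * s₀ * v₀) * s₀ := by
            simp only [mul_assoc]
          rw [h1, hvsv]
        -- the absorption identity
        have hπY : π (e α * u₀ * s₀) = α * π u₀ * π s₀ := by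
          rw [map_mul, map_mul, he]
        have hπZ : π (t₀ * e α) = π t₀ * α := by rw [map_mul, he]
        have hπm : π (v₀ * s₀) = α * π s₀ := by rw [map_mul, hπv₀]
        have habs : (e α * u₀ * s₀) * (v₀ * s₀) * (t₀ * e α)
            = (e α * u₀ * s₀) * (t₀ * e α) := by
          refine NBG2.absorb π e he hid hinv α _ _ _ hm ?_ ?_ ?_ hαα
          · rw [hπY, hπZ]
            exact NBG.bandG0 hα
          · rw [hπY, hπm, hπZ]
            exact NBG.bandG4 hband hnormal hα
          · rw [hπY, hπm, hπZ]
            exact NBG.bandG5 hband hnormal α (π u₀) (π s₀) (π t₀)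
        -- memberships of the three factors
        have hlen' : (M ++ [s₀]).length ≤ n := by
          simp only [List.length_append, List.length_cons, List.length_nil] at hlen ⊢
          omega
        have hL' : ∀ y ∈ M ++ [s₀], y ∈ Sig := by
          intro y hy
          apply hL
          simp only [List.mem_append, List.mem_cons, List.mem_singleton,
            List.not_mem_nil] at hy ⊢
          tauto
        have hprod' : listProd₁ a (M ++ [s₀]) = u₀ * s₀ := by
          rw [listProd₁_append]; rfl
        have hcond' : α * π (listProd₁ a (M ++ [s₀])) * α = α := by
          rw [hprod', map_mul]
          exact NBG.bandG1 hband hnormal hα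
        have h1H : e α * (u₀ * s₀) * e α ∈ Subsemigroup.closure Gset := by
          have h := ih a (M ++ [s₀]) hlen' ha hL' hcond'
          rwa [hprod'] at h
        have hcond₃ : α * π (s₀ * t₀) * α = α := by
          rw [map_mul]
          exact NBG.bandG3 hband hnormal hα
        have h3H : e α * (s₀ * t₀) * e α ∈ Subsemigroup.closure Gset :=
          mkGen (s₀ * t₀) ⟨s₀, [t₀], hs₀, by simpa using ht₀, by norm_num, rfl⟩ hcond₃
        -- assemble
        rw [hxL]
        have keq : e α * (u₀ * s₀ * t₀) * e α
            = (e α * (u₀ * s₀) * e α) * v₀ * (e α * (s₀ * t₀) * e α) := by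
          have k1a : e α * (v₀ * (e α * (s₀ * (t₀ * e α)))) = v₀ * (s₀ * (t₀ * e α)) := by
            rw [← mul_assoc (e α) v₀, hfv0, ← mul_assoc v₀ (e α), hvf0]
          have k2 : (e α * (u₀ * s₀) * e α) * v₀ * (e α * (s₀ * t₀) * e α)
              = (e α * u₀ * s₀) * (v₀ * s₀) * (t₀ * e α) := by
            simp only [mul_assoc]
            rw [k1a]
          rw [k2, habs]
          simp only [mul_assoc]
        have hxeq : e α * (u₀ * s₀ * t₀) * e α ∈ Subsemigroup.closure Gset := by
          rw [keq]
          exact mul_mem (mul_mem h1H hv₀H) h3H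
        exact hxeq
  -- word representation
  have wordrep : ∀ x : S, ∃ (a : S) (L : List S),
      a ∈ Sig ∧ (∀ y ∈ L, y ∈ Sig) ∧ listProd₁ a L = x := by
    have hK : Subsemigroup.closure Sig ≤
        { carrier := {x | ∃ (a : S) (L : List S),
            a ∈ Sig ∧ (∀ y ∈ L, y ∈ Sig) ∧ listProd₁ a L = x},
          mul_mem' := by
            rintro p q ⟨a, L, ha, hL, rfl⟩ ⟨b, M, hb, hM, rfl⟩
            refine ⟨a, L ++ (b :: M), ha, ?_, ?_⟩
            · intro y hy
              simp only [List.mem_append, List.mem_cons] at hy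
              rcases hy with h | h | h
              · exact hL y h
              · subst h; exact hb
              · exact hM y h
            · rw [listProd₁_append]
              exact listProd₁_mul M (listProd₁ a L) b } := by
      apply Subsemigroup.closure_le.mpr
      intro s hs
      exact ⟨s, [], hs, by simp, rfl⟩
    intro x
    have hx : x ∈ Subsemigroup.closure Sig := by rw [hgen]; trivial
    exact hK hx
  -- conclude
  apply Set.Subset.antisymm
  · -- closure ⊆ fiber
    have hKfib : Subsemigroup.closure Gset ≤
        { carrier := {x | π x = α},
          mul_mem' := by
            intro p q hp hq
            exact hfib_mul p q hp hq } := by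
      apply Subsemigroup.closure_le.mpr
      rintro x ⟨s, hsP, ⟨⟨u, v, huv⟩, rfl⟩⟩
      show π (e α * s * e α) = α
      rw [map_mul, map_mul, he]
      have hmap := congrArg (WithOne.map π) huv
      simp only [map_mul, WithOne.map_coe, he] at hmap
      by_cases hu : u = 1 <;> by_cases hv : v = 1
      · subst hu; subst hv
        simp only [map_one, one_mul, mul_one] at hmap
        have h1 : α = π s := by rw [WithOne.map_coe] at hmap; exact_mod_cast hmap
        rw [← h1, hαα, hαα]
      · obtain ⟨v₁, rfl⟩ := WithOne.ne_one_iff_exists.mp hv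
        subst hu
        simp only [map_one, one_mul, WithOne.map_coe, ← WithOne.coe_mul] at hmap
        have h1 : α = π s * π v₁ := by rw [← map_mul]; exact_mod_cast hmap
        rw [h1]
        exact NBG.bandcR hband (π s) (π v₁)
      · obtain ⟨u₁, rfl⟩ := WithOne.ne_one_iff_exists.mp hu
        subst hv
        simp only [map_one, mul_one, WithOne.map_coe, ← WithOne.coe_mul] at hmap
        have h1 : α = π u₁ * π s := by rw [← map_mul]; exact_mod_cast hmap
        rw [h1]
        exact NBG.bandcL hband (π u₁) (π s)
      · obtain ⟨u₁, rfl⟩ := WithOne.ne_one_iff_exists.mp hu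
        obtain ⟨v₁, rfl⟩ := WithOne.ne_one_iff_exists.mp hv
        simp only [WithOne.map_coe, ← WithOne.coe_mul] at hmap
        have h1 : α = π u₁ * π s * π v₁ := by rw [← map_mul, ← map_mul]; exact_mod_cast hmap
        rw [h1]
        exact NBG.bandTT hband hnormal (π u₁) (π s) (π v₁)
    intro x hx
    exact hKfib hx
  · -- fiber ⊆ closure
    intro x hx
    have hxα : π x = α := hx
    obtain ⟨a, L, ha, hL, hprod⟩ := wordrep x
    have hcond : α * π (listProd₁ a L) * α = α := by
      rw [hprod, hxα, hαα, hαα]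
    have h := main L.length a L le_rfl ha hL hcond
    rw [hprod] at h
    have hx1 : e α * x * e α = x := by
      have h1 := (hid x).1
      have h2 := (hid x).2
      rw [hxα] at h1 h2
      rw [h1, h2]
    rwa [hx1] at h
end
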